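/- arXiv:2409.14873 — 5 statements merged into one kernel-verified Lean document; each statement's English description precedes it below -/
import Mathlib

section
/- Strict dissipativity implies the turnpike property for optimal state estimation: Suppose the estimation problem admits a storage function λ_j : X → ℝ with |λ_j(x)| ≤ α_λ(|x − x*_j|) for α_λ ∈ K∞, satisfying the strict dissipation inequality λ_{j+1}(f(x,u_j,w)) − λ_j(x) ≤ −α(|z − z*_j|) + l(x,w;d_j) − l(x*_j,w*_j;d_j) for all feasible z = (x,w) and all j, where α ∈ K∞ and z*_{0:T} is the optimal full-information solution. Let X be compact with diameter-type bound C_λ := max over x₁,x₂ ∈ X of α_λ(|x₁−x₂|). Then with σ(r) := α⁻¹(2C_λ/r), for every N ∈ {0,...,T}, every τ ∈ {0,...,T−N}, and every P ∈ {0,...,N}, at least P points j ∈ {0,...,N−1} of the optimal solution ẑ*_{τ:τ+N} of the truncated problem P_N(d_{τ:τ+N}) satisfy |ẑ*_{τ+j} − z*_{τ+j}| ≤ σ(N−P). -/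
open Finset

/-- **Strict dissipativity implies turnpike** (Theorem 1).
`xstar, wstar` is the optimal full-information solution of `P_T` (stage cost `l`,
no terminal cost), `lam` is a storage function bounded by the class-K∞ function
`αlam` of the distance to the optimal state, satisfying the strict dissipation
inequality with class-K∞ function `α`; `X` is compact, `Cλ` bounds `αlam` of
state differences in `X`, and `σ(r) = α⁻¹(2·Cλ/r)`.  Then for every `N ≤ T`,
every window `τ` with `τ + N ≤ T`, every minimizer `(xh, wh)` of the truncated
problem `P_N(d_{τ:τ+N})`, and every `P ≤ N`, at least `P` points
`j ∈ {0,…,N−1}` satisfy `‖ẑ*_{τ+j} − z*_{τ+j}‖ ≤ σ(N−P)`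
(the case `P = N` is the trivial `σ(0) = α⁻¹(∞) = ∞` case). -/
theorem strict_dissipativity_implies_turnpike
    {S W : Type*} [NormedAddCommGroup S] [NormedAddCommGroup W]
    (f : ℕ → S → W → S) (l : ℕ → S → W → ℝ)
    (Xset : Set S) (Wset : Set W)
    (T : ℕ) (xstar : ℕ → S) (wstar : ℕ → W)
    -- feasibility of the FIE solution
    (hdynstar : ∀ j < T, xstar (j + 1) = f j (xstar j) (wstar j))
    (hXstar : ∀ j ≤ T, xstar j ∈ Xset)
    (hWstar : ∀ j < T, wstar j ∈ Wset)
    -- compact state constraint set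
    (hXcomp : IsCompact Xset)
    -- class-K∞ functions α, αlam
    (α αlam : ℝ → ℝ)
    (hαmono : StrictMonoOn α (Set.Ici 0)) (hα0 : α 0 = 0)
    (hαcont : ContinuousOn α (Set.Ici 0)) (hαtop : Filter.Tendsto α Filter.atTop Filter.atTop)
    (hαlmono : StrictMonoOn αlam (Set.Ici 0)) (hαl0 : αlam 0 = 0)
    (hαlcont : ContinuousOn αlam (Set.Ici 0)) (hαltop : Filter.Tendsto αlam Filter.atTop Filter.atTop)
    -- storage function with bound and strict dissipation inequality
    (lam : ℕ → S → ℝ)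
    (hlambnd : ∀ j ≤ T, ∀ x ∈ Xset, |lam j x| ≤ αlam ‖x - xstar j‖)
    (hdiss : ∀ j < T, ∀ x ∈ Xset, ∀ w ∈ Wset,
      lam (j + 1) (f j x w) - lam j x ≤
        - α ‖((x, w) : S × W) - (xstar j, wstar j)‖ + l j x w - l j (xstar j) (wstar j))
    -- diameter-type bound Cλ
    (Cl : ℝ) (hCl : ∀ x1 ∈ Xset, ∀ x2 ∈ Xset, αlam ‖x1 - x2‖ ≤ Cl)
    -- σ(r) = α⁻¹(2 Cλ / r)
    (σ : ℕ → ℝ) (hσ : ∀ r : ℕ, 0 < r → 0 ≤ σ r ∧ α (σ r) = 2 * Cl / (r : ℝ)) :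
    ∀ N ≤ T, ∀ τ, τ + N ≤ T → ∀ (xh : ℕ → S) (wh : ℕ → W),
      -- (xh, wh) is feasible and optimal for the truncated problem P_N(d_{τ:τ+N})
      (∀ j < N, xh (τ + j + 1) = f (τ + j) (xh (τ + j)) (wh (τ + j))) →
      (∀ j ≤ N, xh (τ + j) ∈ Xset) →
      (∀ j < N, wh (τ + j) ∈ Wset) →
      (∀ (x : ℕ → S) (w : ℕ → W),
        (∀ j < N, x (τ + j + 1) = f (τ + j) (x (τ + j)) (w (τ + j))) →
        (∀ j ≤ N, x (τ + j) ∈ Xset) →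
        (∀ j < N, w (τ + j) ∈ Wset) →
        ∑ j ∈ range N, l (τ + j) (xh (τ + j)) (wh (τ + j)) ≤
          ∑ j ∈ range N, l (τ + j) (x (τ + j)) (w (τ + j))) →
      ∀ P ≤ N, P = N ∨
        ∃ t : Finset ℕ, t ⊆ range N ∧ P ≤ t.card ∧
          ∀ j ∈ t,
            ‖((xh (τ + j), wh (τ + j)) : S × W) - (xstar (τ + j), wstar (τ + j))‖ ≤
              σ (N - P) := by
  classical
  intro N hN τ hτ xh wh hdyn hX hW hopt P hP
  by_cases hPN : P = N
  · exact Or.inl hPN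
  right
  have hPltN : P < N := lt_of_le_of_ne hP hPN
  -- nonnegativity of α on norms
  have hαnn : ∀ x : ℝ, 0 ≤ x → 0 ≤ α x := by
    intro x hx
    have := (hαmono.monotoneOn) (Set.mem_Ici.mpr le_rfl) (Set.mem_Ici.mpr hx) hx
    simpa [hα0] using this
  -- the key sum bound : ∑ α‖ẑ - z*‖ ≤ 2 Cl
  have key : ∑ j ∈ range N,
      α ‖((xh (τ + j), wh (τ + j)) : S × W) - (xstar (τ + j), wstar (τ + j))‖ ≤ 2 * Cl := by
    have tele : ∑ j ∈ range N,
        (lam (τ + (j + 1)) (xh (τ + (j + 1))) - lam (τ + j) (xh (τ + j)))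
        = lam (τ + N) (xh (τ + N)) - lam (τ + 0) (xh (τ + 0)) :=
      Finset.sum_range_sub (fun j => lam (τ + j) (xh (τ + j))) N
    have hstep : ∀ j ∈ range N,
        α ‖((xh (τ + j), wh (τ + j)) : S × W) - (xstar (τ + j), wstar (τ + j))‖ ≤
          (l (τ + j) (xh (τ + j)) (wh (τ + j)) - l (τ + j) (xstar (τ + j)) (wstar (τ + j)))
          - (lam (τ + (j + 1)) (xh (τ + (j + 1))) - lam (τ + j) (xh (τ + j))) := by
      intro j hj
      have hj' := mem_range.mp hj
      have hjT : τ + j < T := by omega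
      have h1 := hdiss (τ + j) hjT (xh (τ + j)) (hX j hj'.le) (wh (τ + j)) (hW j hj')
      have hd : xh (τ + j + 1) = f (τ + j) (xh (τ + j)) (wh (τ + j)) := hdyn j hj'
      rw [← hd] at h1
      have he : lam (τ + (j + 1)) (xh (τ + (j + 1))) = lam (τ + j + 1) (xh (τ + j + 1)) := rfl
      rw [he]
      linarith
    have hsum1 := Finset.sum_le_sum hstep
    rw [Finset.sum_sub_distrib, Finset.sum_sub_distrib, tele] at hsum1
    have hopt' : ∑ j ∈ range N, l (τ + j) (xh (τ + j)) (wh (τ + j)) ≤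
        ∑ j ∈ range N, l (τ + j) (xstar (τ + j)) (wstar (τ + j)) := by
      apply hopt xstar wstar
      · intro j hj; exact hdynstar (τ + j) (by omega)
      · intro j hj; exact hXstar (τ + j) (by omega)
      · intro j hj; exact hWstar (τ + j) (by omega)
    have hbnd : ∀ m, m ≤ N → |lam (τ + m) (xh (τ + m))| ≤ Cl := by
      intro m hm
      have h1 := hlambnd (τ + m) (by omega) (xh (τ + m)) (hX m hm)
      exact h1.trans (hCl _ (hX m hm) _ (hXstar (τ + m) (by omega)))
    have hb0 := abs_le.mp (hbnd 0 (Nat.zero_le N))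
    have hbN := abs_le.mp (hbnd N le_rfl)
    linarith
  -- counting argument
  set σ0 := σ (N - P) with hσ0def
  set t := (range N).filter (fun j =>
    ‖((xh (τ + j), wh (τ + j)) : S × W) - (xstar (τ + j), wstar (τ + j))‖ ≤ σ0) with ht
  refine ⟨t, Finset.filter_subset _ _, ?_, fun j hj => (Finset.mem_filter.mp hj).2⟩
  by_contra hcard
  push_neg at hcard
  have hr : 0 < N - P := by omega
  obtain ⟨hσ0nn, hασ0⟩ := hσ (N - P) hr
  set B := (range N).filter (fun j =>
    ¬ (‖((xh (τ + j), wh (τ + j)) : S × W) - (xstar (τ + j), wstar (τ + j))‖ ≤ σ0)) with hB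
  have hcards : t.card + B.card = N := by
    rw [ht, hB, Finset.card_filter_add_card_filter_not, card_range]
  have hBcard : N - P + 1 ≤ B.card := by omega
  have hBne : B.Nonempty := Finset.card_pos.mp (by omega)
  have hBlt : ∀ j ∈ B, α σ0 <
      α ‖((xh (τ + j), wh (τ + j)) : S × W) - (xstar (τ + j), wstar (τ + j))‖ := by
    intro j hj
    have h1 : σ0 < ‖((xh (τ + j), wh (τ + j)) : S × W) - (xstar (τ + j), wstar (τ + j))‖ :=
      lt_of_not_ge (Finset.mem_filter.mp hj).2
    exact hαmono (Set.mem_Ici.mpr hσ0nn) (Set.mem_Ici.mpr (norm_nonneg _)) h1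
  have h2 : ∑ _j ∈ B, α σ0 < ∑ j ∈ B,
      α ‖((xh (τ + j), wh (τ + j)) : S × W) - (xstar (τ + j), wstar (τ + j))‖ :=
    Finset.sum_lt_sum_of_nonempty hBne hBlt
  rw [Finset.sum_const, nsmul_eq_mul] at h2
  have h3 : ∑ j ∈ B,
      α ‖((xh (τ + j), wh (τ + j)) : S × W) - (xstar (τ + j), wstar (τ + j))‖ ≤
      ∑ j ∈ range N,
      α ‖((xh (τ + j), wh (τ + j)) : S × W) - (xstar (τ + j), wstar (τ + j))‖ :=
    Finset.sum_le_sum_of_subset_of_nonneg (hB ▸ Finset.filter_subset _ _)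
      (fun j _ _ => hαnn _ (norm_nonneg _))
  have hcnn : 0 ≤ α σ0 := hαnn _ hσ0nn
  have hcardR : ((N - P : ℕ) : ℝ) + 1 ≤ (B.card : ℝ) := by
    exact_mod_cast hBcard
  have hmul : (((N - P : ℕ) : ℝ) + 1) * α σ0 ≤ (B.card : ℝ) * α σ0 :=
    mul_le_mul_of_nonneg_right hcardR hcnn
  have hNP : ((N - P : ℕ) : ℝ) ≠ 0 := Nat.cast_ne_zero.mpr (by omega)
  have hcompute : ((N - P : ℕ) : ℝ) * α σ0 = 2 * Cl := by
    rw [hασ0, mul_comm, div_mul_cancel₀ _ hNP]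
  nlinarith [hmul, h2, h3, key, hcompute, hcnn]
end

section
/- Decaying sensitivity implies turnpike: Suppose there exists β ∈ KL such that any two minimizers of the endpoint-constrained auxiliary problem P̄(d_{τ:τ+N}, x^i, x^t) with different endpoint data satisfy |ζ̄_N(j, d, x^i₁, x^t₁) − ζ̄_N(j, d, x^i₂, x^t₂)| ≤ β(|x^i₁ − x^i₂|, j) + β(|x^t₁ − x^t₂|, N − j) for all j ∈ {0,...,N}. Let X be compact with diameter at most C. Then for all N ∈ {0,...,T}, τ ∈ {0,...,T−N}, and j ∈ {0,...,N}, the truncated-problem solution ẑ*_{τ+j} = ζ_N(j, d_{τ:τ+N}) and the FIE solution z*_{τ+j} = ζ_T(τ+j, d_{0:T}) satisfy |ẑ*_{τ+j} − z*_{τ+j}| ≤ β(C, j) + β(C, N − j). -/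
/-- Feasibility of a trajectory segment for the estimation problem on the
window `{τ, …, τ+N}`. -/
def Feasible {S W Y : Type*} [AddCommGroup Y]
    (f : ℕ → S → W → S) (hmap : ℕ → S → Y) (y : ℕ → Y)
    (Xset : Set S) (Wset : Set W) (Vset : Set Y)
    (τ N : ℕ) (x : ℕ → S) (w : ℕ → W) : Prop :=
  (∀ j < N, x (τ + j + 1) = f (τ + j) (x (τ + j)) (w (τ + j))) ∧
  (∀ j ≤ N, x (τ + j) ∈ Xset) ∧
  (∀ j ≤ N, y (τ + j) - hmap (τ + j) (x (τ + j)) ∈ Vset) ∧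
  (∀ j < N, w (τ + j) ∈ Wset)

/-- Feasibility for the endpoint-constrained auxiliary problem
`P̄(d_{τ:τ+N}, xi, xt)`. -/
def FeasibleE {S W Y : Type*} [AddCommGroup Y]
    (f : ℕ → S → W → S) (hmap : ℕ → S → Y) (y : ℕ → Y)
    (Xset : Set S) (Wset : Set W) (Vset : Set Y)
    (τ N : ℕ) (xi xt : S) (x : ℕ → S) (w : ℕ → W) : Prop :=
  Feasible f hmap y Xset Wset Vset τ N x w ∧ x τ = xi ∧ x (τ + N) = xt

/-- Window cost `Σ_{j=τ}^{τ+N−1} l(x_j, w_j; d_j) + g(x_{τ+N}; d_{τ+N})`. -/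
def Cost {S W : Type*} (l : ℕ → S → W → ℝ) (g : ℕ → S → ℝ)
    (τ N : ℕ) (x : ℕ → S) (w : ℕ → W) : ℝ :=
  (∑ j ∈ Finset.range N, l (τ + j) (x (τ + j)) (w (τ + j))) + g (τ + N) (x (τ + N))

/-- The combined point `z_{τ+j} = (x_{τ+j}, w_{τ+j})` of a window trajectory,
with the convention `z_{τ+N} = (x_{τ+N}, 0)`. -/
def pt {S W : Type*} [Zero W] (x : ℕ → S) (w : ℕ → W) (τ N j : ℕ) : S × W :=
  (x (τ + j), if j < N then w (τ + j) else 0)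

lemma splice_opt {S W Y : Type*} [AddCommGroup Y]
    (f : ℕ → S → W → S) (hmap : ℕ → S → Y) (y : ℕ → Y)
    (Xset : Set S) (Wset : Set W) (Vset : Set Y)
    (l : ℕ → S → W → ℝ) (g : ℕ → S → ℝ) (T : ℕ)
    (xstar : ℕ → S) (wstar : ℕ → W)
    (hfs : Feasible f hmap y Xset Wset Vset 0 T xstar wstar)
    (hos : ∀ x w, Feasible f hmap y Xset Wset Vset 0 T x w →
      Cost l g 0 T xstar wstar ≤ Cost l g 0 T x w)
    (τ N : ℕ) (hτN : τ + N ≤ T) :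
    ∀ x w, FeasibleE f hmap y Xset Wset Vset τ N (xstar τ) (xstar (τ+N)) x w →
      Cost l g τ N xstar wstar ≤ Cost l g τ N x w := by
  classical
  intro x w hFE
  obtain ⟨⟨hdyn, hX, hV, hW⟩, hi, ht⟩ := hFE
  have hstar_dyn : ∀ k < T, xstar (k+1) = f k (xstar k) (wstar k) := by
    intro k hk; simpa using hfs.1 k hk
  have hstar_X : ∀ k ≤ T, xstar k ∈ Xset := by
    intro k hk; simpa using hfs.2.1 k hk
  have hstar_V : ∀ k ≤ T, y k - hmap k (xstar k) ∈ Vset := by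
    intro k hk; simpa using hfs.2.2.1 k hk
  have hstar_W : ∀ k < T, wstar k ∈ Wset := by
    intro k hk; simpa using hfs.2.2.2 k hk
  set x' : ℕ → S := fun k => if τ ≤ k ∧ k ≤ τ + N then x k else xstar k with hx'
  set w' : ℕ → W := fun k => if τ ≤ k ∧ k < τ + N then w k else wstar k with hw'
  have hx'mid : ∀ k, τ ≤ k → k ≤ τ + N → x' k = x k := by
    intro k h1 h2; simp [hx', h1, h2]
  have hw'mid : ∀ k, τ ≤ k → k < τ + N → w' k = w k := by
    intro k h1 h2; simp [hw', h1, h2]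
  have hx'star : ∀ k, k ≤ τ ∨ τ + N ≤ k → x' k = xstar k := by
    intro k hk
    rcases hk with hk | hk
    · rcases eq_or_lt_of_le hk with rfl | hk2
      · rw [hx'mid k le_rfl (by omega), hi]
      · simp [hx', Nat.not_le.mpr hk2]
    · rcases eq_or_lt_of_le hk with h | hk2
      · rw [← h, hx'mid _ (by omega) le_rfl, ht]
      · simp [hx', Nat.not_le.mpr hk2]
  have hw'star : ∀ k, k < τ ∨ τ + N ≤ k → w' k = wstar k := by
    intro k hk
    rcases hk with hk | hk
    · simp [hw', Nat.not_le.mpr hk]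
    · simp [hw', Nat.not_lt.mpr hk]
  have hfeas' : Feasible f hmap y Xset Wset Vset 0 T x' w' := by
    refine ⟨fun k hk => ?_, fun k hk => ?_, fun k hk => ?_, fun k hk => ?_⟩ <;>
      simp only [Nat.zero_add] at *
    · rcases lt_or_ge k τ with hkτ | hkτ
      · rw [hx'star (k+1) (Or.inl hkτ), hx'star k (Or.inl hkτ.le),
          hw'star k (Or.inl hkτ)]
        exact hstar_dyn k hk
      · rcases lt_or_ge k (τ+N) with hk2 | hk2
        · rw [hx'mid (k+1) (by omega) (by omega), hx'mid k hkτ hk2.le,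
            hw'mid k hkτ hk2]
          obtain ⟨j, rfl⟩ := Nat.exists_eq_add_of_le hkτ
          exact hdyn j (by omega)
        · rw [hx'star (k+1) (Or.inr (by omega)), hx'star k (Or.inr hk2),
            hw'star k (Or.inr hk2)]
          exact hstar_dyn k hk
    · by_cases h : τ ≤ k ∧ k ≤ τ + N
      · rw [hx'mid k h.1 h.2]
        obtain ⟨j, rfl⟩ := Nat.exists_eq_add_of_le h.1
        exact hX j (by omega)
      · rw [hx'star k (by omega)]; exact hstar_X k hk
    · by_cases h : τ ≤ k ∧ k ≤ τ + N
      · rw [hx'mid k h.1 h.2]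
        obtain ⟨j, rfl⟩ := Nat.exists_eq_add_of_le h.1
        exact hV j (by omega)
      · rw [hx'star k (by omega)]; exact hstar_V k hk
    · by_cases h : τ ≤ k ∧ k < τ + N
      · rw [hw'mid k h.1 h.2]
        obtain ⟨j, rfl⟩ := Nat.exists_eq_add_of_le h.1
        exact hW j (by omega)
      · rw [hw'star k (by omega)]; exact hstar_W k hk
  have key := hos x' w' hfeas'
  have hsum : ∀ (u : ℕ → S) (v : ℕ → W) (a b : ℕ),
      ∑ j ∈ Finset.range b, l (a+j) (u (a+j)) (v (a+j)) =
        ∑ k ∈ Finset.Ico a (a+b), l k (u k) (v k) := by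
    intro u v a b
    rw [Finset.sum_Ico_eq_sum_range]
    simp
  have hsplit : ∀ (u : ℕ → S) (v : ℕ → W),
      ∑ k ∈ Finset.range T, l k (u k) (v k) =
        (∑ k ∈ Finset.Ico 0 τ, l k (u k) (v k) +
          ∑ k ∈ Finset.Ico τ (τ+N), l k (u k) (v k)) +
          ∑ k ∈ Finset.Ico (τ+N) T, l k (u k) (v k) := by
    intro u v
    rw [Finset.range_eq_Ico,
      ← Finset.sum_Ico_consecutive _ (Nat.zero_le τ) (by omega : τ ≤ T),
      ← Finset.sum_Ico_consecutive _ (by omega : τ ≤ τ+N) hτN, add_assoc]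
  have e1 : ∑ k ∈ Finset.Ico 0 τ, l k (x' k) (w' k) =
      ∑ k ∈ Finset.Ico 0 τ, l k (xstar k) (wstar k) := by
    refine Finset.sum_congr rfl fun k hk => ?_
    have hk' := (Finset.mem_Ico.mp hk).2
    rw [hx'star k (Or.inl hk'.le), hw'star k (Or.inl hk')]
  have e3 : ∑ k ∈ Finset.Ico (τ+N) T, l k (x' k) (w' k) =
      ∑ k ∈ Finset.Ico (τ+N) T, l k (xstar k) (wstar k) := by
    refine Finset.sum_congr rfl fun k hk => ?_
    have hk' := (Finset.mem_Ico.mp hk).1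
    rw [hx'star k (Or.inr hk'), hw'star k (Or.inr hk')]
  have e2 : ∑ k ∈ Finset.Ico τ (τ+N), l k (x' k) (w' k) =
      ∑ k ∈ Finset.Ico τ (τ+N), l k (x k) (w k) := by
    refine Finset.sum_congr rfl fun k hk => ?_
    have hk' := Finset.mem_Ico.mp hk
    rw [hx'mid k hk'.1 hk'.2.le, hw'mid k hk'.1 hk'.2]
  have eg : x' T = xstar T := hx'star T (Or.inr hτN)
  simp only [Cost, Nat.zero_add] at key
  rw [hsplit x' w', hsplit xstar wstar, e1, e2, e3, eg] at key
  have hmid : ∑ k ∈ Finset.Ico τ (τ+N), l k (xstar k) (wstar k) ≤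
      ∑ k ∈ Finset.Ico τ (τ+N), l k (x k) (w k) := by linarith
  simp only [Cost]
  rw [hsum xstar wstar τ N, hsum x w τ N, ht]
  linarith

/-- **Decaying sensitivity implies turnpike** (Theorem 2): if any two
minimizers of the endpoint-constrained auxiliary problems satisfy the decaying
sensitivity bound `‖ζ̄_N(j,d,xi₁,xt₁) − ζ̄_N(j,d,xi₂,xt₂)‖ ≤ β(‖xi₁−xi₂‖, j) +
β(‖xt₁−xt₂‖, N−j)` with `β ∈ KL`, and `X` is compact with diameter at most `C`,
then every minimizer of the truncated problem `P_N(d_{τ:τ+N})` stays within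
`β(C, j) + β(C, N−j)` of the full-information solution. -/
theorem decaying_sensitivity_implies_turnpike
    {S W Y : Type*} [NormedAddCommGroup S] [NormedAddCommGroup W] [AddCommGroup Y]
    (f : ℕ → S → W → S) (hmap : ℕ → S → Y) (y : ℕ → Y)
    (Xset : Set S) (Wset : Set W) (Vset : Set Y)
    (l : ℕ → S → W → ℝ) (g : ℕ → S → ℝ)
    (T : ℕ)
    -- β is of class KL
    (β : ℝ → ℝ → ℝ)
    (hβK : ∀ s : ℝ, 0 ≤ s → StrictMonoOn (fun r => β r s) (Set.Ici 0) ∧ β 0 s = 0)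
    (hβL : ∀ r : ℝ, 0 ≤ r → Antitone (β r) ∧
      Filter.Tendsto (β r) Filter.atTop (nhds 0))
    (hβnn : ∀ r : ℝ, 0 ≤ r → ∀ s : ℝ, 0 ≤ β r s)
    -- decaying sensitivity of the endpoint-constrained auxiliary problems
    (hsens : ∀ τ N, τ + N ≤ T →
      ∀ (xi1 xt1 xi2 xt2 : S) (x1 : ℕ → S) (w1 : ℕ → W) (x2 : ℕ → S) (w2 : ℕ → W),
      FeasibleE f hmap y Xset Wset Vset τ N xi1 xt1 x1 w1 →
      (∀ x w, FeasibleE f hmap y Xset Wset Vset τ N xi1 xt1 x w →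
        Cost l g τ N x1 w1 ≤ Cost l g τ N x w) →
      FeasibleE f hmap y Xset Wset Vset τ N xi2 xt2 x2 w2 →
      (∀ x w, FeasibleE f hmap y Xset Wset Vset τ N xi2 xt2 x w →
        Cost l g τ N x2 w2 ≤ Cost l g τ N x w) →
      ∀ j ≤ N, ‖pt x1 w1 τ N j - pt x2 w2 τ N j‖ ≤
        β ‖xi1 - xi2‖ (j : ℝ) + β ‖xt1 - xt2‖ ((N : ℝ) - (j : ℝ)))
    -- X compact with diameter at most C
    (hXc : IsCompact Xset)
    (C : ℝ) (hC : ∀ x1 ∈ Xset, ∀ x2 ∈ Xset, ‖x1 - x2‖ ≤ C)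
    -- full-information solution
    (xstar : ℕ → S) (wstar : ℕ → W)
    (hfs : Feasible f hmap y Xset Wset Vset 0 T xstar wstar)
    (hos : ∀ x w, Feasible f hmap y Xset Wset Vset 0 T x w →
      Cost l g 0 T xstar wstar ≤ Cost l g 0 T x w) :
    ∀ N ≤ T, ∀ τ, τ + N ≤ T → ∀ (xh : ℕ → S) (wh : ℕ → W),
      Feasible f hmap y Xset Wset Vset τ N xh wh →
      (∀ x w, Feasible f hmap y Xset Wset Vset τ N x w →
        Cost l g τ N xh wh ≤ Cost l g τ N x w) →
      ∀ j ≤ N, ‖pt xh wh τ N j - pt xstar wstar τ N j‖ ≤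
        β C (j : ℝ) + β C ((N : ℝ) - (j : ℝ)) := by
  
  intro N hN τ hτN xh wh hfeas hopt j hj
  have hXh0 : xh τ ∈ Xset := by simpa using hfeas.2.1 0 (Nat.zero_le N)
  have hXhN : xh (τ + N) ∈ Xset := hfeas.2.1 N le_rfl
  have hXs0 : xstar τ ∈ Xset := by simpa using hfs.2.1 τ (by omega)
  have hXsN : xstar (τ + N) ∈ Xset := by simpa using hfs.2.1 (τ+N) hτN
  have hC0 : 0 ≤ C := by
    have := hC (xh τ) hXh0 (xh τ) hXh0
    simpa using this
  have hstarFeas : Feasible f hmap y Xset Wset Vset τ N xstar wstar := by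
    refine ⟨fun k hk => ?_, fun k hk => ?_, fun k hk => ?_, fun k hk => ?_⟩
    · simpa [Nat.add_assoc] using hfs.1 (τ+k) (by omega)
    · simpa using hfs.2.1 (τ+k) (by omega)
    · simpa using hfs.2.2.1 (τ+k) (by omega)
    · simpa using hfs.2.2.2 (τ+k) (by omega)
  have h1 : FeasibleE f hmap y Xset Wset Vset τ N (xh τ) (xh (τ+N)) xh wh :=
    ⟨hfeas, rfl, rfl⟩
  have h2 : ∀ x w, FeasibleE f hmap y Xset Wset Vset τ N (xh τ) (xh (τ+N)) x w →
      Cost l g τ N xh wh ≤ Cost l g τ N x w := fun x w hF => hopt x w hF.1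
  have h3 : FeasibleE f hmap y Xset Wset Vset τ N (xstar τ) (xstar (τ+N)) xstar wstar :=
    ⟨hstarFeas, rfl, rfl⟩
  have h4 := splice_opt f hmap y Xset Wset Vset l g T xstar wstar hfs hos τ N hτN
  have hb := hsens τ N hτN (xh τ) (xh (τ+N)) (xstar τ) (xstar (τ+N))
    xh wh xstar wstar h1 h2 h3 h4 j hj
  refine hb.trans (add_le_add ?_ ?_)
  · have hm := ((hβK (j:ℝ) (Nat.cast_nonneg j)).1).monotoneOn
    exact hm (Set.mem_Ici.mpr (norm_nonneg _)) (Set.mem_Ici.mpr hC0)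
      (hC _ hXh0 _ hXs0)
  · have hs : (0:ℝ) ≤ (N:ℝ) - (j:ℝ) := by
      have : (j:ℝ) ≤ (N:ℝ) := Nat.cast_le.mpr hj
      linarith
    have hm := ((hβK ((N:ℝ) - (j:ℝ)) hs).1).monotoneOn
    exact hm (Set.mem_Ici.mpr (norm_nonneg _)) (Set.mem_Ici.mpr hC0)
      (hC _ hXhN _ hXsN)
end

section
/- Uniform closeness of the approximate estimator to the turnpike: Assume the turnpike property holds with bounds |ẑ*_{τ+j} − z*_{τ+j}| ≤ β(C, N−j) for τ = 0, ≤ β(C,j) + β(C,N−j) for 1 ≤ τ ≤ T−N−1, and ≤ β(C,j) for τ = T−N, all j ∈ {0,...,N}. Define the approximate estimator ẑ^ae_j by patching truncated solutions: ẑ^ae_j = ζ_N(j, d_{0:N}) for j ∈ {0,...,N/2}, ζ_N(N/2, d_{j−N/2 : j+N/2}) for j ∈ {N/2+1,...,T−N/2−1}, and ζ_N(N−T+j, d_{T−N:T}) for j ∈ {T−N/2,...,T} (N even). Then |ẑ^ae_j − z*_j| ≤ 2·β(C, N/2) for all j ∈ {0,...,T}. -/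
/-- **Uniform closeness of the approximate estimator to the turnpike**
(Lemma 2): under the three-case turnpike bounds (left boundary `τ = 0`,
interior windows `1 ≤ τ ≤ T−N−1`, right boundary `τ = T−N`), the patched
approximate estimator `ẑ^ae` (built from the truncated solutions
`sol τ j = ζ_N(j, d_{τ:τ+N})`, `N` even) satisfies
`‖ẑ^ae_j − z*_j‖ ≤ 2·β(C, N/2)` for all `j ∈ {0,…,T}`. -/
theorem approximate_estimator_closeness
    {E : Type*} [NormedAddCommGroup E]
    (β : ℝ → ℝ → ℝ) (C : ℝ)
    (hβnn : ∀ s : ℝ, 0 ≤ β C s) (hβanti : Antitone (β C))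
    (T N : ℕ) (hNeven : Even N) (hNT : N ≤ T)
    (sol : ℕ → ℕ → E)   -- sol τ j = ζ_N(j, d_{τ:τ+N})
    (zstar : ℕ → E)     -- z*_j, the full-information solution
    (hturn_left : ∀ j ≤ N, ‖sol 0 j - zstar j‖ ≤ β C ((N : ℝ) - (j : ℝ)))
    (hturn_mid : ∀ τ, 1 ≤ τ → τ + N + 1 ≤ T → ∀ j ≤ N,
      ‖sol τ j - zstar (τ + j)‖ ≤ β C (j : ℝ) + β C ((N : ℝ) - (j : ℝ)))
    (hturn_right : ∀ j ≤ N, ‖sol (T - N) j - zstar (T - N + j)‖ ≤ β C (j : ℝ))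
    (zae : ℕ → E)
    (hzae : ∀ j, zae j =
      if j ≤ N / 2 then sol 0 j
      else if j + N / 2 + 1 ≤ T then sol (j - N / 2) (N / 2)
      else sol (T - N) (j - (T - N))) :
    ∀ j ≤ T, ‖zae j - zstar j‖ ≤ 2 * β C ((N : ℝ) / 2) := by
  intro j hjT
  obtain ⟨m, hm⟩ := hNeven
  have hN2 : N / 2 = m := by omega
  have hcast : ((N / 2 : ℕ) : ℝ) = (N : ℝ) / 2 := by
    rw [hN2]; subst hm; push_cast; ring
  rw [hzae j]
  by_cases h1 : j ≤ N / 2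
  · rw [if_pos h1]
    have hjN : j ≤ N := by omega
    have hb := hturn_left j hjN
    have hmono : β C ((N : ℝ) - (j : ℝ)) ≤ β C ((N : ℝ) / 2) := by
      apply hβanti
      have : (j : ℝ) ≤ (N : ℝ) / 2 := by
        rw [← hcast]; exact_mod_cast h1
      linarith
    have := hβnn ((N : ℝ) / 2)
    linarith
  · rw [if_neg h1]
    by_cases h2 : j + N / 2 + 1 ≤ T
    · rw [if_pos h2]
      have hτ1 : 1 ≤ j - N / 2 := by omega
      have hτ2 : (j - N / 2) + N + 1 ≤ T := by omega
      have hb := hturn_mid (j - N / 2) hτ1 hτ2 (N / 2) (Nat.div_le_self N 2)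
      have hj : j - N / 2 + N / 2 = j := by omega
      rw [hj] at hb
      have h3 : (N : ℝ) - (N : ℝ) / 2 = (N : ℝ) / 2 := by ring
      rw [hcast, h3] at hb
      linarith
    · rw [if_neg h2]
      have hjge : T - N ≤ j := by omega
      have hj'le : j - (T - N) ≤ N := by omega
      have hb := hturn_right (j - (T - N)) hj'le
      have hj : T - N + (j - (T - N)) = j := by omega
      rw [hj] at hb
      have hmono : β C ((j - (T - N) : ℕ) : ℝ) ≤ β C ((N : ℝ) / 2) := by
        apply hβanti
        rw [← hcast]
        exact_mod_cast (by omega : N / 2 ≤ j - (T - N))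
      have := hβnn ((N : ℝ) / 2)
      linarith
end

section
/- Approximate optimality of the patched estimator (performance theorem): Under additive disturbances f = f_a + w, quadratic stage cost l(x,w;d) = |w|²_Q + |y − h(x,u)|²_R and terminal cost g(x;d) = |y − h(x,u)|²_G, Lipschitz continuity of f_a and h (constants L_f, L_h), and the turnpike bound |ẑ^ae_j − z*_j| ≤ σ(N) := 2β(C, N/2) for all j ∈ {0,...,T}, the approximate estimator satisfies, for every ε > 0, J_T(x̂^ae, ŵ^ae; d_{0:T}) ≤ (1+ε)·V_T(d_{0:T}) + ((1+ε)/ε)·(T·σ₁(N) + σ₂(N)), where σ₁(s) = ((1+L_f)²·λ_max(Q)² + L_h²·λ_max(R)²)·σ(s)² and σ₂(s) = L_h²·λ_max(G)²·σ(s)² are class-L functions. -/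
open Matrix

/-- Euclidean norm `|v| = √(vᵀv)` of a vector. -/
noncomputable def evnorm {p : ℕ} (v : Fin p → ℝ) : ℝ :=
  Real.sqrt (v ⬝ᵥ v)

/-- Weighted norm `|v|_Q = √(vᵀ Q v)` for a (positive definite) matrix `Q`. -/
noncomputable def wnorm {p : ℕ} (Q : Matrix (Fin p) (Fin p) ℝ) (v : Fin p → ℝ) : ℝ :=
  Real.sqrt (v ⬝ᵥ Q *ᵥ v)

/-- Estimation cost
`J_T(x, w; d) = Σ_{j<T} (|w_j|²_Q + |y_j − h(x_j,u_j)|²_R) + |y_T − h(x_T,u_T)|²_G`. -/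
noncomputable def Jcost {n m p : ℕ} (Q : Matrix (Fin n) (Fin n) ℝ)
    (R G : Matrix (Fin p) (Fin p) ℝ)
    (h : (Fin n → ℝ) → (Fin m → ℝ) → (Fin p → ℝ))
    (u : ℕ → Fin m → ℝ) (y : ℕ → Fin p → ℝ) (T : ℕ)
    (x : ℕ → Fin n → ℝ) (w : ℕ → Fin n → ℝ) : ℝ :=
  (∑ j ∈ Finset.range T,
    (wnorm Q (w j) ^ 2 + wnorm R (y j - h (x j) (u j)) ^ 2))
    + wnorm G (y T - h (x T) (u T)) ^ 2

/-!
The turnpike bound keeps `x̂^ae_j` within `σ` of `x*_j`. By Lipschitz continuity the induced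
disturbance `ŵ^ae_j` is then within `(1 + L_f) σ` of `w*_j`, and each output residual within
`L_h σ` of the one along `x*`; the spectral bounds convert these into bounds in the weighted
norms. The triangle inequality for `|·|_Q` followed by
`(a + b)² ≤ (1 + ε) a² + ((1 + ε) / ε) b²` bounds every term of `J_T(x̂^ae, ŵ^ae)` by `(1 + ε)`
times the matching term of `J_T(x*, w*)` plus an error, and summing the `T` stage terms and the
terminal term gives the claim.
-/

lemma add_sq_le_young {ε : ℝ} (hε : 0 < ε) (a b : ℝ) :
    (a + b) ^ 2 ≤ (1 + ε) * a ^ 2 + (1 + ε) / ε * b ^ 2 := by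
  have hgap : (1 + ε) * a ^ 2 + (1 + ε) / ε * b ^ 2 - (a + b) ^ 2 = (ε * a - b) ^ 2 / ε := by
    field_simp
    ring
  nlinarith [div_nonneg (sq_nonneg (ε * a - b)) hε.le]

section Norms

variable {p : ℕ}

lemma evnorm_eq_norm (v : Fin p → ℝ) :
    evnorm v = ‖(EuclideanSpace.equiv (Fin p) ℝ).symm v‖ := by
  rw [evnorm, EuclideanSpace.norm_eq]
  congr 1
  exact Finset.sum_congr rfl fun i _ => by simp [sq]

lemma evnorm_add_le (a b : Fin p → ℝ) : evnorm (a + b) ≤ evnorm a + evnorm b := by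
  simpa only [evnorm_eq_norm, map_add] using norm_add_le _ _

lemma evnorm_sub_comm (a b : Fin p → ℝ) : evnorm (a - b) = evnorm (b - a) := by
  simp only [evnorm_eq_norm, map_sub, norm_sub_rev]

lemma wnorm_nonneg (Q : Matrix (Fin p) (Fin p) ℝ) (v : Fin p → ℝ) : 0 ≤ wnorm Q v :=
  Real.sqrt_nonneg _

open scoped MatrixOrder in
lemma Matrix.PosSemidef.wnorm_eq_evnorm_sqrt_mulVec {Q : Matrix (Fin p) (Fin p) ℝ}
    (hQ : Q.PosSemidef) (v : Fin p → ℝ) : wnorm Q v = evnorm (CFC.sqrt Q *ᵥ v) := by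
  have hsymm : (CFC.sqrt Q)ᵀ = CFC.sqrt Q := by
    simpa [conjTranspose] using (CFC.sqrt_nonneg Q).posSemidef.isHermitian.eq
  rw [wnorm, evnorm]
  conv_lhs => rw [← CFC.sq_sqrt Q hQ.nonneg]
  rw [sq, ← mulVec_mulVec, dotProduct_mulVec, ← mulVec_transpose, hsymm]

lemma Matrix.PosSemidef.wnorm_add_le {Q : Matrix (Fin p) (Fin p) ℝ} (hQ : Q.PosSemidef)
    (a b : Fin p → ℝ) : wnorm Q (a + b) ≤ wnorm Q a + wnorm Q b := by
  simpa only [hQ.wnorm_eq_evnorm_sqrt_mulVec, mulVec_add] using evnorm_add_le _ _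

lemma Matrix.PosSemidef.wnorm_sq_le_of_evnorm_sub_le {Q : Matrix (Fin p) (Fin p) ℝ}
    (hQ : Q.PosSemidef) {l : ℝ} (hl0 : 0 ≤ l) (hl : ∀ v, wnorm Q v ≤ l * evnorm v)
    {a b : Fin p → ℝ} {c : ℝ} (hab : evnorm (a - b) ≤ c) {ε : ℝ} (hε : 0 < ε) :
    wnorm Q a ^ 2 ≤ (1 + ε) * wnorm Q b ^ 2 + (1 + ε) / ε * (l * c) ^ 2 := by
  have hle : wnorm Q a ≤ wnorm Q b + l * c :=
    calc wnorm Q a = wnorm Q (b + (a - b)) := by rw [add_sub_cancel]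
      _ ≤ wnorm Q b + wnorm Q (a - b) := hQ.wnorm_add_le _ _
      _ ≤ wnorm Q b + l * c := by grw [hl (a - b), hab]
  exact (pow_le_pow_left₀ (wnorm_nonneg Q a) hle 2).trans (add_sq_le_young hε _ _)

end Norms

section Estimation

variable {n m p : ℕ}

lemma evnorm_sub_disturbance_le {f : (Fin n → ℝ) → Fin n → ℝ} {L : ℝ}
    (hf : ∀ x₁ x₂, evnorm (f x₁ - f x₂) ≤ L * evnorm (x₁ - x₂)) (x x' z z' : Fin n → ℝ) :
    evnorm ((z' - f z) - (x' - f x)) ≤ evnorm (z' - x') + L * evnorm (z - x) := by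
  have hsplit : (z' - f z) - (x' - f x) = (z' - x') + (f x - f z) := by abel
  rw [hsplit, evnorm_sub_comm z]
  exact (evnorm_add_le _ _).trans (by grw [hf x z])

lemma evnorm_sub_residual_le {h : (Fin n → ℝ) → Fin p → ℝ} {L : ℝ}
    (hh : ∀ x₁ x₂, evnorm (h x₁ - h x₂) ≤ L * evnorm (x₁ - x₂)) (y : Fin p → ℝ)
    (x z : Fin n → ℝ) : evnorm ((y - h z) - (y - h x)) ≤ L * evnorm (z - x) := by
  rw [sub_sub_sub_cancel_left, evnorm_sub_comm z]
  exact hh x z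

lemma Jcost_le_of_stage_le (Q : Matrix (Fin n) (Fin n) ℝ) (R G : Matrix (Fin p) (Fin p) ℝ)
    (h : (Fin n → ℝ) → (Fin m → ℝ) → Fin p → ℝ) (u : ℕ → Fin m → ℝ) (y : ℕ → Fin p → ℝ)
    (T : ℕ) {x w x' w' : ℕ → Fin n → ℝ} {k c s₁ s₂ : ℝ}
    (hstage : ∀ j < T, wnorm Q (w j) ^ 2 + wnorm R (y j - h (x j) (u j)) ^ 2 ≤
      k * (wnorm Q (w' j) ^ 2 + wnorm R (y j - h (x' j) (u j)) ^ 2) + c * s₁)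
    (hterminal : wnorm G (y T - h (x T) (u T)) ^ 2 ≤
      k * wnorm G (y T - h (x' T) (u T)) ^ 2 + c * s₂) :
    Jcost Q R G h u y T x w ≤ k * Jcost Q R G h u y T x' w' + c * (T * s₁ + s₂) := by
  have hsum := Finset.sum_le_sum fun j hj => hstage j (Finset.mem_range.mp hj)
  unfold Jcost
  simp only [Finset.sum_add_distrib, ← Finset.mul_sum, Finset.sum_const, Finset.card_range,
    nsmul_eq_mul] at hsum ⊢
  linear_combination hsum + hterminal

end Estimation

theorem approximate_estimator_performance_general {n m p : ℕ}
    (Q : Matrix (Fin n) (Fin n) ℝ) (hQ : Q.PosDef)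
    (R G : Matrix (Fin p) (Fin p) ℝ) (hR : R.PosDef) (hG : G.PosDef)
    (lQ lR lG : ℝ) (hlQ0 : 0 ≤ lQ) (hlR0 : 0 ≤ lR) (hlG0 : 0 ≤ lG)
    (hlQ : ∀ v : Fin n → ℝ, wnorm Q v ≤ lQ * evnorm v)
    (hlR : ∀ v : Fin p → ℝ, wnorm R v ≤ lR * evnorm v)
    (hlG : ∀ v : Fin p → ℝ, wnorm G v ≤ lG * evnorm v)
    (fa : (Fin n → ℝ) → (Fin m → ℝ) → (Fin n → ℝ))
    (h : (Fin n → ℝ) → (Fin m → ℝ) → (Fin p → ℝ))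
    (Lf Lh : ℝ) (hLf0 : 0 ≤ Lf) (hLh0 : 0 ≤ Lh)
    (hLf : ∀ (x1 x2 : Fin n → ℝ) (uu : Fin m → ℝ),
      evnorm (fa x1 uu - fa x2 uu) ≤ Lf * evnorm (x1 - x2))
    (hLh : ∀ (x1 x2 : Fin n → ℝ) (uu : Fin m → ℝ),
      evnorm (h x1 uu - h x2 uu) ≤ Lh * evnorm (x1 - x2))
    (T N : ℕ) (u : ℕ → Fin m → ℝ) (y : ℕ → Fin p → ℝ)
    -- full-information optimal solution (x*, w*): feasible and minimizing
    (xstar wstar : ℕ → Fin n → ℝ)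
    (hdyn : ∀ j < T, xstar (j + 1) = fa (xstar j) (u j) + wstar j)
    -- approximate estimator and its induced disturbances
    (xae : ℕ → Fin n → ℝ) (wae : ℕ → Fin n → ℝ)
    (hwae : ∀ j, wae j = xae (j + 1) - fa (xae j) (u j))
    -- turnpike bound σ(N) = 2 β(C, N/2)
    (β : ℝ → ℝ → ℝ) (C : ℝ)
    (hturn : ∀ j ≤ T, evnorm (xae j - xstar j) ≤ 2 * β C ((N : ℝ) / 2)) :
    ∀ ε > (0:ℝ),
      Jcost Q R G h u y T xae wae ≤
        (1 + ε) * Jcost Q R G h u y T xstar wstar +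
          ((1 + ε) / ε) *
            ((T : ℝ) * (((1 + Lf) ^ 2 * lQ ^ 2 + Lh ^ 2 * lR ^ 2) *
                (2 * β C ((N : ℝ) / 2)) ^ 2)
              + Lh ^ 2 * lG ^ 2 * (2 * β C ((N : ℝ) / 2)) ^ 2) := by
  intro ε hε
  set σ := 2 * β C ((N : ℝ) / 2)
  have hresidual : ∀ j ≤ T, ∀ {S : Matrix (Fin p) (Fin p) ℝ} {l : ℝ}, S.PosSemidef → 0 ≤ l →
      (∀ v, wnorm S v ≤ l * evnorm v) → wnorm S (y j - h (xae j) (u j)) ^ 2 ≤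
        (1 + ε) * wnorm S (y j - h (xstar j) (u j)) ^ 2 + (1 + ε) / ε * (l * (Lh * σ)) ^ 2 :=
    fun j hj S l hS hl0 hl => hS.wnorm_sq_le_of_evnorm_sub_le hl0 hl
      ((evnorm_sub_residual_le (fun x₁ x₂ => hLh x₁ x₂ (u j)) _ _ _).trans
        (by grw [hturn j hj])) hε
  refine Jcost_le_of_stage_le Q R G h u y T (fun j hj => ?_) ?_
  · have hwstar : wstar j = xstar (j + 1) - fa (xstar j) (u j) := by
      rw [hdyn j hj, add_sub_cancel_left]
    have hdist : evnorm (wae j - wstar j) ≤ (1 + Lf) * σ := by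
      rw [hwae, hwstar]
      refine (evnorm_sub_disturbance_le (fun x₁ x₂ => hLf x₁ x₂ (u j)) _ _ _ _).trans ?_
      grw [hturn (j + 1) hj, hturn j hj.le]
      linarith
    have hQterm := hQ.posSemidef.wnorm_sq_le_of_evnorm_sub_le hlQ0 hlQ hdist hε
    have hRterm := hresidual j hj.le hR.posSemidef hlR0 hlR
    linear_combination hQterm + hRterm
  · linear_combination hresidual T le_rfl hG.posSemidef hlG0 hlG

/-- **Approximate optimality of the patched estimator** (Theorem 3): with
additive disturbances, quadratic stage and terminal costs, Lipschitz `f_a` and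
`h`, spectral bounds `|v|_Q ≤ λ_Q|v|` etc. (paper's constants taken as given),
and the turnpike bound `|x̂^ae_j − x*_j| ≤ σ(N) := 2β(C, N/2)` for all
`j ≤ T`, the approximate estimator satisfies, for every `ε > 0`,
`J_T(x̂^ae, ŵ^ae) ≤ (1+ε)·V_T + ((1+ε)/ε)·(T·σ₁(N) + σ₂(N))` with
`σ₁(N) = ((1+L_f)²λ_Q² + L_h²λ_R²)·σ(N)²` and `σ₂(N) = L_h²λ_G²·σ(N)²`. -/
theorem approximate_estimator_performance {n m p : ℕ}
    (Q : Matrix (Fin n) (Fin n) ℝ) (hQ : Q.PosDef)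
    (R G : Matrix (Fin p) (Fin p) ℝ) (hR : R.PosDef) (hG : G.PosDef)
    (lQ lR lG : ℝ) (hlQ0 : 0 ≤ lQ) (hlR0 : 0 ≤ lR) (hlG0 : 0 ≤ lG)
    (hlQ : ∀ v : Fin n → ℝ, wnorm Q v ≤ lQ * evnorm v)
    (hlR : ∀ v : Fin p → ℝ, wnorm R v ≤ lR * evnorm v)
    (hlG : ∀ v : Fin p → ℝ, wnorm G v ≤ lG * evnorm v)
    (fa : (Fin n → ℝ) → (Fin m → ℝ) → (Fin n → ℝ))
    (h : (Fin n → ℝ) → (Fin m → ℝ) → (Fin p → ℝ))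
    (Lf Lh : ℝ) (hLf0 : 0 ≤ Lf) (hLh0 : 0 ≤ Lh)
    (hLf : ∀ (x1 x2 : Fin n → ℝ) (uu : Fin m → ℝ),
      evnorm (fa x1 uu - fa x2 uu) ≤ Lf * evnorm (x1 - x2))
    (hLh : ∀ (x1 x2 : Fin n → ℝ) (uu : Fin m → ℝ),
      evnorm (h x1 uu - h x2 uu) ≤ Lh * evnorm (x1 - x2))
    (T N : ℕ) (u : ℕ → Fin m → ℝ) (y : ℕ → Fin p → ℝ)
    -- full-information optimal solution (x*, w*): feasible and minimizing
    (xstar wstar : ℕ → Fin n → ℝ)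
    (hdyn : ∀ j < T, xstar (j + 1) = fa (xstar j) (u j) + wstar j)
    (hmin : ∀ (x w : ℕ → Fin n → ℝ),
      (∀ j < T, x (j + 1) = fa (x j) (u j) + w j) →
      Jcost Q R G h u y T xstar wstar ≤ Jcost Q R G h u y T x w)
    -- approximate estimator and its induced disturbances
    (xae : ℕ → Fin n → ℝ) (wae : ℕ → Fin n → ℝ)
    (hwae : ∀ j, wae j = xae (j + 1) - fa (xae j) (u j))
    -- turnpike bound σ(N) = 2 β(C, N/2)
    (β : ℝ → ℝ → ℝ) (C : ℝ) (hβnn : 0 ≤ β C ((N : ℝ) / 2))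
    (hturn : ∀ j ≤ T, evnorm (xae j - xstar j) ≤ 2 * β C ((N : ℝ) / 2)) :
    ∀ ε > (0:ℝ),
      Jcost Q R G h u y T xae wae ≤
        (1 + ε) * Jcost Q R G h u y T xstar wstar +
          ((1 + ε) / ε) *
            ((T : ℝ) * (((1 + Lf) ^ 2 * lQ ^ 2 + Lh ^ 2 * lR ^ 2) *
                (2 * β C ((N : ℝ) / 2)) ^ 2)
              + Lh ^ 2 * lG ^ 2 * (2 * β C ((N : ℝ) / 2)) ^ 2) :=
  approximate_estimator_performance_general Q hQ R G hR hG lQ lR lG hlQ0 hlR0 hlG0 hlQ hlR hlG fa h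
    Lf Lh hLf0 hLh0 hLf hLh T N u y xstar wstar hdyn xae wae hwae β C hturn
end

section
/- Turnpike in the scalar integrator example is an instance of exponentially decaying sensitivity: For the linear system x_{t+1} = x_t + w_t, y_t = x_t + v_t with quadratic cost l = ŵ² + (y − x̂)², the endpoint-constrained window problems are strictly convex quadratic programs, and there exist c > 0 and ρ ∈ (0,1) such that solutions with different endpoint conditions satisfy |ζ̄_N(j, d, x^i₁, x^t₁) − ζ̄_N(j, d, x^i₂, x^t₂)| ≤ c·ρ^j·|x^i₁ − x^i₂| + c·ρ^{N−j}·|x^t₁ − x^t₂| for all j ∈ {0,...,N}. -/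
/-- Cost of the endpoint-constrained window problem for the scalar integrator
`x_{t+1} = x_t + w_t`, `y_t = x_t + v_t`, after eliminating `w_j = x_{j+1} − x_j`:
`Σ_{j<N} ((x_{j+1} − x_j)² + (y_j − x_j)²) + (y_N − x_N)²`. -/
noncomputable def integratorCost (N : ℕ) (y : ℕ → ℝ) (x : Fin (N + 1) → ℝ) : ℝ :=
  (∑ j : Fin N, ((x j.succ - x j.castSucc) ^ 2 + (y j.1 - x j.castSucc) ^ 2))
    + (y N - x (Fin.last N)) ^ 2

/-!
After eliminating the disturbances, the cost restricted to a line `t ↦ x + t • v` is a quadratic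
polynomial in `t` whose leading coefficient is the cost of `v` with zero data, positive for
`v ≠ 0`. This gives strict convexity, and the first-order condition along the coordinate
directions gives the discrete Euler–Lagrange equation `x k + x (k + 2) = 3 x (k + 1) - y (k + 1)`
at interior points. The difference `D` of two minimizers therefore solves the homogeneous
recurrence, whose solutions obey a discrete minimum principle. With `ρ = (3 - √5) / 2` the
smaller root of `ρ ^ 2 - 3 ρ + 1`, both `ρ ^ n` and `ρ ^ (N - n)` solve the recurrence, and
comparing `± D` with `ρ ^ n |D 0| + ρ ^ (N - n) |D N|` gives the bound with `c = 1`.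
-/

open Finset

theorem eq_zero_of_forall_mul_add_sq_nonneg {b q : ℝ} (h : ∀ t : ℝ, 0 ≤ t * b + t ^ 2 * q) :
    b = 0 := by
  have := discrim_le_zero (a := q) (b := b) (c := 0) fun t => by linarith [h t]
  rw [discrim] at this
  nlinarith [sq_nonneg b]

section QuadraticAlongLines

variable {E : Type*} [AddCommGroup E] [Module ℝ E] {f : E → ℝ} {b : E → E → ℝ} {q : E → ℝ}

theorem strictConvexOn_univ_of_add_smul
    (hf : ∀ x v (t : ℝ), f (x + t • v) = f x + t * b x v + t ^ 2 * q v)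
    (hq : ∀ v ≠ 0, 0 < q v) : StrictConvexOn ℝ Set.univ f := by
  refine ⟨convex_univ, fun p _ r _ hpr s t hs ht hst => ?_⟩
  obtain rfl : t = 1 - s := by linarith
  set z := s • p + (1 - s) • r
  have hfp := hf z (p - r) (1 - s)
  have hfr := hf z (p - r) (-s)
  rw [show z + (1 - s) • (p - r) = p by module] at hfp
  rw [show z + (-s) • (p - r) = r by module] at hfr
  have hpos := mul_pos (mul_pos hs ht) (hq _ (sub_ne_zero.mpr hpr))
  -- `s * f p + (1 - s) * f r - f z = s * (1 - s) * q (p - r)`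
  simp only [smul_eq_mul]
  nlinarith

theorem eq_zero_of_le_add_smul (hf : ∀ x v (t : ℝ), f (x + t • v) = f x + t * b x v + t ^ 2 * q v)
    {x v : E} (hx : ∀ t : ℝ, f x ≤ f (x + t • v)) : b x v = 0 :=
  eq_zero_of_forall_mul_add_sq_nonneg (q := q v) fun t => by linarith [hx t, hf x v t]

end QuadraticAlongLines

/-- `integratorCost` for a state sequence indexed by `ℕ`; only `X 0, …, X N` enter. -/
def windowCost (N : ℕ) (y X : ℕ → ℝ) : ℝ :=
  ∑ j ∈ range N, ((X (j + 1) - X j) ^ 2 + (y j - X j) ^ 2) + (y N - X N) ^ 2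

def windowCostDeriv (N : ℕ) (y X V : ℕ → ℝ) : ℝ :=
  2 * (∑ j ∈ range N, ((X (j + 1) - X j) * (V (j + 1) - V j) - (y j - X j) * V j)
    - (y N - X N) * V N)

section WindowCost

variable {N : ℕ} {y : ℕ → ℝ}

theorem windowCost_congr {X X' : ℕ → ℝ} (h : ∀ n ≤ N, X n = X' n) :
    windowCost N y X = windowCost N y X' := by
  unfold windowCost
  rw [h N le_rfl]
  congr 1
  refine sum_congr rfl fun j hj => ?_
  rw [mem_range] at hj
  rw [h j hj.le, h (j + 1) hj]

theorem windowCost_add_smul (X V : ℕ → ℝ) (t : ℝ) :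
    windowCost N y (X + t • V) = windowCost N y X + t * windowCostDeriv N y X V
      + t ^ 2 * windowCost N 0 V := by
  simp only [windowCost, windowCostDeriv, Pi.add_apply, Pi.smul_apply, smul_eq_mul,
    Pi.zero_apply]
  have hsum : ∑ j ∈ range N,
        ((X (j + 1) + t * V (j + 1) - (X j + t * V j)) ^ 2 + (y j - (X j + t * V j)) ^ 2)
      = ∑ j ∈ range N, ((X (j + 1) - X j) ^ 2 + (y j - X j) ^ 2)
        + 2 * t * ∑ j ∈ range N, ((X (j + 1) - X j) * (V (j + 1) - V j) - (y j - X j) * V j)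
        + t ^ 2 * ∑ j ∈ range N, ((V (j + 1) - V j) ^ 2 + (0 - V j) ^ 2) := by
    rw [mul_sum, mul_sum, ← sum_add_distrib, ← sum_add_distrib]
    exact sum_congr rfl fun j _ => by ring
  rw [hsum]
  ring

theorem windowCostDeriv_single {k : ℕ} (hk : k + 2 ≤ N) (X : ℕ → ℝ) :
    windowCostDeriv N y X (Pi.single (k + 1) 1) =
      2 * (3 * X (k + 1) - X k - X (k + 2) - y (k + 1)) := by
  have hkN : k < N := by omega
  have hk1N : k + 1 < N := by omega
  simp only [windowCostDeriv, Pi.single_apply, Nat.add_right_cancel_iff, mul_sub, mul_ite,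
    mul_one, mul_zero, sum_sub_distrib, sum_ite_eq', mem_range, hkN, hk1N, if_true,
    if_neg (show N ≠ k + 1 by omega)]
  ring

theorem windowCost_euler_lagrange {X : ℕ → ℝ} {k : ℕ} (hk : k + 2 ≤ N)
    (hX : ∀ t : ℝ, windowCost N y X ≤ windowCost N y (X + t • Pi.single (k + 1) 1)) :
    X k + X (k + 2) = 3 * X (k + 1) - y (k + 1) := by
  have h := eq_zero_of_le_add_smul windowCost_add_smul hX
  rw [windowCostDeriv_single hk] at h
  linarith

theorem nonneg_of_add_le_three_mul {e : ℕ → ℝ}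
    (he : ∀ k, k + 2 ≤ N → e k + e (k + 2) ≤ 3 * e (k + 1)) (h0 : 0 ≤ e 0) (hN : 0 ≤ e N)
    {n : ℕ} (hn : n ≤ N) : 0 ≤ e n := by
  by_contra! hneg
  obtain ⟨m, hm, hmin⟩ := exists_min_image (range (N + 1)) e ⟨n, mem_range.mpr (by omega)⟩
  have hmin' : ∀ i ≤ N, e m ≤ e i := fun i hi => hmin i (mem_range.mpr (by omega))
  have hm_neg : e m < 0 := (hmin' n hn).trans_lt hneg
  obtain ⟨k, rfl⟩ : ∃ k, m = k + 1 := Nat.exists_eq_succ_of_ne_zero (by rintro rfl; linarith)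
  have hkN : k + 1 ≠ N := by rintro rfl; linarith
  have hk : k + 2 ≤ N := by rw [mem_range] at hm; omega
  -- at a negative minimum, `e k + e (k + 2) ≥ 2 e (k + 1) > 3 e (k + 1)`
  linarith [he k hk, hmin' k (by omega), hmin' (k + 2) hk]

theorem abs_le_of_add_eq_three_mul {ρ : ℝ} (hρ0 : 0 ≤ ρ) (hρ : ρ ^ 2 + 1 = 3 * ρ) {D : ℕ → ℝ}
    (hD : ∀ k, k + 2 ≤ N → D k + D (k + 2) = 3 * D (k + 1)) {n : ℕ} (hn : n ≤ N) :
    |D n| ≤ ρ ^ n * |D 0| + ρ ^ (N - n) * |D N| := by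
  set g : ℕ → ℝ := fun n => ρ ^ n * |D 0| + ρ ^ (N - n) * |D N|
  have hg : ∀ k, k + 2 ≤ N → g k + g (k + 2) = 3 * g (k + 1) := by
    intro k hk
    obtain ⟨m, hm⟩ : ∃ m, N - k = m + 2 := ⟨N - k - 2, by omega⟩
    simp only [g, hm, show N - (k + 2) = m by omega, show N - (k + 1) = m + 1 by omega]
    linear_combination (ρ ^ k * |D 0| + ρ ^ m * |D N|) * hρ
  have hρN₀ : 0 ≤ ρ ^ N * |D 0| := mul_nonneg (pow_nonneg hρ0 N) (abs_nonneg _)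
  have hρN₁ : 0 ≤ ρ ^ N * |D N| := mul_nonneg (pow_nonneg hρ0 N) (abs_nonneg _)
  have hg0 : g 0 = |D 0| + ρ ^ N * |D N| := by simp [g]
  have hgN : g N = ρ ^ N * |D 0| + |D N| := by simp [g]
  have hupper := nonneg_of_add_le_three_mul (e := g - D)
    (fun k hk => by simp only [Pi.sub_apply]; linarith [hg k hk, hD k hk])
    (by simp only [Pi.sub_apply, hg0]; linarith [le_abs_self (D 0)])
    (by simp only [Pi.sub_apply, hgN]; linarith [le_abs_self (D N)]) hn
  have hlower := nonneg_of_add_le_three_mul (e := g + D)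
    (fun k hk => by simp only [Pi.add_apply]; linarith [hg k hk, hD k hk])
    (by simp only [Pi.add_apply, hg0]; linarith [neg_abs_le (D 0)])
    (by simp only [Pi.add_apply, hgN]; linarith [neg_abs_le (D N)]) hn
  simp only [Pi.sub_apply, Pi.add_apply] at hupper hlower
  exact abs_le.mpr ⟨by linarith, by linarith⟩

end WindowCost

section IntegratorCost

variable {N : ℕ} {y : ℕ → ℝ}

open Fin.NatCast

theorem integratorCost_eq_windowCost (x : Fin (N + 1) → ℝ) :
    integratorCost N y x = windowCost N y (fun n : ℕ => x n) := by
  rw [integratorCost, windowCost, ← Fin.sum_univ_eq_sum_range, Fin.natCast_eq_last]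
  congr 1
  refine sum_congr rfl fun j _ => ?_
  have hsucc : ((j + 1 : ℕ) : Fin (N + 1)) = j.succ := Fin.ext (Fin.val_cast_of_lt (by omega))
  have hcast : ((j : ℕ) : Fin (N + 1)) = j.castSucc := Fin.ext (Fin.val_cast_of_lt (by omega))
  rw [hsucc, hcast]

theorem integratorCost_comp_val (X : ℕ → ℝ) :
    integratorCost N y (fun i => X i) = windowCost N y X := by
  rw [integratorCost_eq_windowCost]
  exact windowCost_congr fun n hn => by simp [Fin.val_cast_of_lt (Nat.lt_succ_of_le hn)]

theorem integratorCost_add_smul (x v : Fin (N + 1) → ℝ) (t : ℝ) :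
    integratorCost N y (x + t • v) = integratorCost N y x
      + t * windowCostDeriv N y (fun n : ℕ => x n) (fun n : ℕ => v n)
      + t ^ 2 * integratorCost N 0 v := by
  simp only [integratorCost_eq_windowCost]
  exact windowCost_add_smul _ _ t

theorem integratorCost_zero_pos {v : Fin (N + 1) → ℝ} (hv : v ≠ 0) :
    0 < integratorCost N 0 v := by
  obtain ⟨i, hi⟩ := Function.ne_iff.mp hv
  simp only [integratorCost, Pi.zero_apply, zero_sub, neg_sq]
  have hterm : ∀ j : Fin N, 0 ≤ (v j.succ - v j.castSucc) ^ 2 + v j.castSucc ^ 2 :=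
    fun j => by positivity
  induction i using Fin.lastCases with
  | last => exact add_pos_of_nonneg_of_pos (sum_nonneg fun j _ => hterm j) (sq_pos_of_ne_zero hi)
  | cast j =>
    have hj : 0 < (v j.succ - v j.castSucc) ^ 2 + v j.castSucc ^ 2 :=
      add_pos_of_nonneg_of_pos (sq_nonneg _) (sq_pos_of_ne_zero hi)
    exact add_pos_of_pos_of_nonneg (hj.trans_le (single_le_sum (fun j _ => hterm j) (mem_univ j)))
      (sq_nonneg _)

theorem integratorCost_strictConvexOn : StrictConvexOn ℝ Set.univ (integratorCost N y) :=
  strictConvexOn_univ_of_add_smul integratorCost_add_smul fun _ => integratorCost_zero_pos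

theorem integratorCost_euler_lagrange {x : Fin (N + 1) → ℝ}
    (hx : ∀ x' : Fin (N + 1) → ℝ, x' 0 = x 0 → x' (Fin.last N) = x (Fin.last N) →
      integratorCost N y x ≤ integratorCost N y x')
    {k : ℕ} (hk : k + 2 ≤ N) :
    x k + x ((k + 2 : ℕ) : Fin (N + 1)) = 3 * x ((k + 1 : ℕ) : Fin (N + 1)) - y (k + 1) := by
  refine windowCost_euler_lagrange (X := fun n : ℕ => x n) hk fun t => ?_
  rw [← integratorCost_eq_windowCost, ← integratorCost_comp_val]
  apply hx
  · simp
  · simp [Pi.single_eq_of_ne (show N ≠ k + 1 by omega)]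

end IntegratorCost

theorem exists_mem_Ioo_sq_add_one_eq_three_mul :
    ∃ ρ ∈ Set.Ioo (0 : ℝ) 1, ρ ^ 2 + 1 = 3 * ρ := by
  have h5 : Real.sqrt 5 ^ 2 = 5 := Real.sq_sqrt (by norm_num)
  have h2 : 2 < Real.sqrt 5 := by nlinarith [Real.sqrt_nonneg 5]
  have h3 : Real.sqrt 5 < 3 := by nlinarith [Real.sqrt_nonneg 5]
  exact ⟨(3 - Real.sqrt 5) / 2, ⟨by linarith, by linarith⟩, by linear_combination h5 / 4⟩

/-- **Exponentially decaying sensitivity in the scalar integrator example**: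
the endpoint-constrained window problems are strictly convex quadratic
programs, and there exist `c > 0` and `ρ ∈ (0,1)` such that minimizers with
different endpoint conditions satisfy
`|x₁_j − x₂_j| ≤ c·ρ^j·|xi₁ − xi₂| + c·ρ^{N−j}·|xt₁ − xt₂|` for all
`j ∈ {0,…,N}`, uniformly in `N` and in the data `y`. -/
theorem integrator_decaying_sensitivity :
    (∀ (N : ℕ) (y : ℕ → ℝ), StrictConvexOn ℝ Set.univ (integratorCost N y)) ∧
    ∃ c > (0:ℝ), ∃ ρ ∈ Set.Ioo (0:ℝ) 1,
      ∀ (N : ℕ) (y : ℕ → ℝ) (xi1 xt1 xi2 xt2 : ℝ) (x1 x2 : Fin (N + 1) → ℝ),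
        x1 0 = xi1 → x1 (Fin.last N) = xt1 →
        x2 0 = xi2 → x2 (Fin.last N) = xt2 →
        (∀ x : Fin (N + 1) → ℝ, x 0 = xi1 → x (Fin.last N) = xt1 →
          integratorCost N y x1 ≤ integratorCost N y x) →
        (∀ x : Fin (N + 1) → ℝ, x 0 = xi2 → x (Fin.last N) = xt2 →
          integratorCost N y x2 ≤ integratorCost N y x) →
        ∀ j : Fin (N + 1), |x1 j - x2 j| ≤
          c * ρ ^ (j : ℕ) * |xi1 - xi2| + c * ρ ^ (N - (j : ℕ)) * |xt1 - xt2| := by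
  refine ⟨fun N y => integratorCost_strictConvexOn, ?_⟩
  obtain ⟨ρ, hρ, hρroot⟩ := exists_mem_Ioo_sq_add_one_eq_three_mul
  refine ⟨1, one_pos, ρ, hρ, ?_⟩
  rintro N y _ _ _ _ x1 x2 rfl rfl rfl rfl hmin1 hmin2 j
  open Fin.NatCast in
  set D : ℕ → ℝ := fun n => x1 n - x2 n
  have hD : ∀ k, k + 2 ≤ N → D k + D (k + 2) = 3 * D (k + 1) := fun k hk => by
    linarith [integratorCost_euler_lagrange hmin1 hk, integratorCost_euler_lagrange hmin2 hk]
  simpa [D] using abs_le_of_add_eq_three_mul hρ.1.le hρroot hD j.is_le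
end
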